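/- Under the setting of the penalized least-squares estimator with λ ≥ (4/D)·N⋆(XᵀU), the estimator β̂ satisfies (1/D)‖X(β − β̂)‖₂² ≤ (λ/2)·min{3N(β − β̂), 3N(β) − N(β̂)}. -/

import Mathlib

/-!
Expanding the square at the competitor `β` gives the basic inequality
`(1/D)‖X(β - β̂)‖² + (2/D)⟨XᵀU, β - β̂⟩ + λ N(β̂) ≤ λ N(β)`.
The cross term is at most `(2/D) N⋆(XᵀU) N(β - β̂) ≤ (λ/2) N(β - β̂)`, so
`(1/D)‖X(β - β̂)‖² ≤ λ (N β - N β̂) + (λ/2) N(β - β̂)`, and the two bounds follow from the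
triangle inequalities `N β - N β̂ ≤ N(β - β̂) ≤ N β + N β̂`.
The dual norm is finite because on a finite-dimensional space every linear functional is
bounded with respect to any norm.
-/

open Matrix

section DualNorm

variable {E : Type*} [AddCommGroup E] [Module ℝ E]

theorem Seminorm.exists_abs_le_mul_of_definite [FiniteDimensional ℝ E] (p : Seminorm ℝ E)
    (hp : ∀ x, p x = 0 → x = 0) (f : E →ₗ[ℝ] ℝ) : ∃ C, ∀ x, |f x| ≤ C * p x := by
  let : NormedAddCommGroup E :=
    AddGroupNorm.toNormedAddCommGroup { p.toAddGroupSeminorm with eq_zero_of_map_eq_zero' := hp }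
  let : NormedSpace ℝ E := ⟨fun c x => (p.smul' c x).le⟩
  exact ⟨‖f.toContinuousLinearMap‖, f.toContinuousLinearMap.le_opNorm⟩

noncomputable def dualNorm (p : Seminorm ℝ E) (f : E →ₗ[ℝ] ℝ) : ℝ :=
  sSup {r | ∃ x, p x ≤ 1 ∧ r = f x}

variable [FiniteDimensional ℝ E] {p : Seminorm ℝ E}

theorem le_dualNorm (hp : ∀ x, p x = 0 → x = 0) (f : E →ₗ[ℝ] ℝ) {x : E} (hx : p x ≤ 1) :
    f x ≤ dualNorm p f := by
  obtain ⟨C, hC⟩ := p.exists_abs_le_mul_of_definite hp f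
  refine le_csSup ⟨|C|, ?_⟩ ⟨x, hx, rfl⟩
  rintro _ ⟨y, hy, rfl⟩
  calc f y ≤ |f y| := le_abs_self _
    _ ≤ C * p y := hC y
    _ ≤ |C| * 1 := mul_le_mul (le_abs_self C) hy (apply_nonneg p y) (abs_nonneg C)
    _ = |C| := mul_one _

theorem abs_le_dualNorm_mul (hp : ∀ x, p x = 0 → x = 0) (f : E →ₗ[ℝ] ℝ) (x : E) :
    |f x| ≤ dualNorm p f * p x := by
  rcases eq_or_ne x 0 with rfl | hx
  · simp
  have hpx : 0 < p x := (apply_nonneg p x).lt_of_ne' (mt (hp x) hx)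
  set u := (p x)⁻¹ • x
  have hu : p u = 1 := by
    rw [map_smul_eq_mul, Real.norm_of_nonneg (inv_nonneg.2 hpx.le), inv_mul_cancel₀ hpx.ne']
  have hfu : |f u| ≤ dualNorm p f := by
    refine abs_le.2 ⟨?_, le_dualNorm hp f hu.le⟩
    have h := le_dualNorm hp f (x := -u) (by rw [map_neg_eq_map, hu])
    rw [map_neg] at h
    linarith
  calc |f x| = p x * |f u| := by
        rw [map_smul, smul_eq_mul, abs_mul, abs_of_pos (inv_pos.2 hpx),
          mul_inv_cancel_left₀ hpx.ne']
    _ ≤ p x * dualNorm p f := mul_le_mul_of_nonneg_left hfu hpx.le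
    _ = dualNorm p f * p x := mul_comm _ _

end DualNorm

theorem sum_sq_sub_mulVec {m n : Type*} [Fintype m] [Fintype n] (X : Matrix m n ℝ) (y : m → ℝ)
    (β γ : n → ℝ) :
    ∑ t, (y t - (X *ᵥ γ) t) ^ 2 = ∑ t, (y t - (X *ᵥ β) t) ^ 2
      + 2 * ((Xᵀ *ᵥ (y - X *ᵥ β)) ⬝ᵥ (β - γ)) + ∑ t, ((X *ᵥ (β - γ)) t) ^ 2 := by
  rw [mulVec_transpose, ← dotProduct_mulVec, dotProduct, Finset.mul_sum,
    ← Finset.sum_add_distrib, ← Finset.sum_add_distrib]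
  refine Finset.sum_congr rfl fun t _ => ?_
  simp only [mulVec_sub, Pi.sub_apply]
  ring

theorem refined_basic_inequality_general {D p : ℕ} (lam : ℝ) (hlam0 : 0 < lam)
    (X : Matrix (Fin D) (Fin p) ℝ) (y : Fin D → ℝ)
    (N : (Fin p → ℝ) → ℝ)
    (hNeq : ∀ w, N w = 0 ↔ w = 0)
    (hNsmul : ∀ (c : ℝ) (w), N (c • w) = |c| * N w)
    (hNadd : ∀ w w', N (w + w') ≤ N w + N w')
    (β : Fin p → ℝ)
    (hlam : lam ≥ (4 / (D : ℝ)) * sSup {r : ℝ | ∃ w : Fin p → ℝ, N w ≤ 1 ∧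
      r = ∑ j, (X.transpose.mulVec (y - X.mulVec β)) j * w j})
    (βhat : Fin p → ℝ)
    (hmin : ∀ a : Fin p → ℝ,
      (1 / (D : ℝ)) * (∑ t, (y t - X.mulVec βhat t) ^ 2) + lam * N βhat ≤
        (1 / (D : ℝ)) * (∑ t, (y t - X.mulVec a t) ^ 2) + lam * N a) :
    (1 / (D : ℝ)) * (∑ t, (X.mulVec (β - βhat) t) ^ 2) ≤
      (lam / 2) * min (3 * N (β - βhat)) (3 * N β - N βhat) := by
  let Np : Seminorm ℝ (Fin p → ℝ) := Seminorm.of N hNadd hNsmul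
  set c : ℝ := 1 / D
  set v := Xᵀ *ᵥ (y - X *ᵥ β)
  set S := dualNorm Np (dotProductBilin ℝ ℝ v)
  have hS : 4 * c * S ≤ lam := calc
    4 * c * S = 4 / D * S := by ring
    _ ≤ lam := hlam
  have hdual : |v ⬝ᵥ (β - βhat)| ≤ S * N (β - βhat) :=
    abs_le_dualNorm_mul (p := Np) (fun w => (hNeq w).1) (dotProductBilin ℝ ℝ v) (β - βhat)
  have hbasic : c * ∑ t, ((X *ᵥ (β - βhat)) t) ^ 2 + 2 * c * (v ⬝ᵥ (β - βhat)) + lam * N βhat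
      ≤ lam * N β := by
    have h := hmin β
    rw [sum_sq_sub_mulVec X y β βhat] at h
    linarith
  have hcross : -(2 * c * (v ⬝ᵥ (β - βhat))) ≤ lam / 2 * N (β - βhat) := calc
    -(2 * c * (v ⬝ᵥ (β - βhat))) ≤ 2 * c * (S * N (β - βhat)) := by
        linarith [mul_le_mul_of_nonneg_left (neg_le_of_abs_le hdual) (by positivity : 0 ≤ 2 * c)]
    _ = 4 * c * S / 2 * N (β - βhat) := by ring
    _ ≤ lam / 2 * N (β - βhat) := by gcongr; exact apply_nonneg Np _
  have hsub : N β - N βhat ≤ N (β - βhat) := (le_abs_self _).trans (abs_sub_map_le_sub Np β βhat)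
  have hadd : N (β - βhat) ≤ N β + N βhat := map_sub_le_add Np β βhat
  rw [mul_min_of_nonneg _ _ (by positivity)]
  exact le_min (by linarith [mul_le_mul_of_nonneg_left hsub hlam0.le])
    (by linarith [mul_le_mul_of_nonneg_left hadd hlam0.le])

/-- Refined basic inequality for the `N`-penalized least-squares estimator with
`λ ≥ (4/D)·N⋆(XᵀU)`. -/
theorem refined_basic_inequality {D p : ℕ} (hD : 0 < D) (lam : ℝ) (hlam0 : 0 < lam)
    (X : Matrix (Fin D) (Fin p) ℝ) (y : Fin D → ℝ)
    (N : (Fin p → ℝ) → ℝ)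
    (hN0 : ∀ w, 0 ≤ N w) (hNeq : ∀ w, N w = 0 ↔ w = 0)
    (hNsmul : ∀ (c : ℝ) (w), N (c • w) = |c| * N w)
    (hNadd : ∀ w w', N (w + w') ≤ N w + N w')
    (β : Fin p → ℝ)
    (hlam : lam ≥ (4 / (D : ℝ)) * sSup {r : ℝ | ∃ w : Fin p → ℝ, N w ≤ 1 ∧
      r = ∑ j, (X.transpose.mulVec (y - X.mulVec β)) j * w j})
    (βhat : Fin p → ℝ)
    (hmin : ∀ a : Fin p → ℝ,
      (1 / (D : ℝ)) * (∑ t, (y t - X.mulVec βhat t) ^ 2) + lam * N βhat ≤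
        (1 / (D : ℝ)) * (∑ t, (y t - X.mulVec a t) ^ 2) + lam * N a) :
    (1 / (D : ℝ)) * (∑ t, (X.mulVec (β - βhat) t) ^ 2) ≤
      (lam / 2) * min (3 * N (β - βhat)) (3 * N β - N βhat) :=
  refined_basic_inequality_general lam hlam0 X y N hNeq hNsmul hNadd β hlam βhat hmin
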